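/- arXiv:0912.0782 — 5 statements merged into one kernel-verified Lean document; each statement's English description precedes it below -/
import Mathlib

section
/- Let T > 0, ε ∈ (0,T), and let φ : [0,∞) → ℝ be nondecreasing and concave with φ(0) = 0. Then the quantity 2φ(t−s) − φ(t−s+ε) − φ(t−s−ε) is nonnegative for 0 ≤ s ≤ t−ε, and ∫_ε^T ∫_0^{t−ε} (2φ(t−s) − φ(t−s+ε) − φ(t−s−ε)) ds dt ≤ T·ε·φ(2ε). -/
/-!
The first claim is midpoint concavity at `t - s`. For the second, substitute `u = t - s`: the
inner integral becomes `∫ u in ε..t, (2 φ u - φ (u + ε) - φ (u - ε))`, which telescopes to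
`W ε - W 0 + W (t - ε) - W t` for the sliding window `W a = ∫ x in a..a + ε, φ x`. Since `φ` is
nondecreasing and nonnegative, `W` is nondecreasing and nonnegative, so the inner integral is at
most `W ε ≤ ε φ (2ε)`; integrating over `t ∈ [ε, T]` gives the bound.
-/

open Set MeasureTheory intervalIntegral

theorem ConcaveOn.add_le_two_mul {s : Set ℝ} {f : ℝ → ℝ} (hf : ConcaveOn ℝ s f) {x h : ℝ}
    (hl : x - h ∈ s) (hr : x + h ∈ s) : f (x - h) + f (x + h) ≤ 2 * f x := by
  have hmid := hf.2 hl hr (by norm_num : (0 : ℝ) ≤ 1 / 2) (by norm_num : (0 : ℝ) ≤ 1 / 2)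
    (by norm_num)
  simp only [smul_eq_mul, show 1 / 2 * (x - h) + 1 / 2 * (x + h) = x by ring] at hmid
  linarith

theorem intervalIntegral.integral_sub_comp_add_right {f : ℝ → ℝ} {a b c : ℝ}
    (hab : IntervalIntegrable f volume a b) (hshift : IntervalIntegrable f volume (a + c) (b + c))
    (hac : IntervalIntegrable f volume a (a + c)) :
    ∫ x in a..b, (f x - f (x + c)) = (∫ x in a..a + c, f x) - ∫ x in b..b + c, f x := by
  have hcomp : IntervalIntegrable (fun x ↦ f (x + c)) volume a b := by
    simpa using hshift.comp_add_right c
  rw [integral_sub hab hcomp, integral_comp_add_right,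
    integral_interval_sub_interval_comm hab hshift hac]

theorem MonotoneOn.integral_add_le_integral_add {f : ℝ → ℝ} {a b c : ℝ}
    (hf : MonotoneOn f (Ici a)) (hab : a ≤ b) (hc : 0 ≤ c) :
    ∫ x in a..a + c, f x ≤ ∫ x in b..b + c, f x := by
  have hint : ∀ d, a ≤ d → IntervalIntegrable (fun x ↦ f (d + x)) volume 0 c := fun d hd ↦
    MonotoneOn.intervalIntegrable fun x hx y hy hxy ↦ by
      rw [uIcc_of_le hc] at hx hy
      exact hf (mem_Ici.2 (by linarith [hx.1])) (mem_Ici.2 (by linarith [hy.1])) (by linarith)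
  have hshift : ∀ d, ∫ x in d..d + c, f x = ∫ x in (0 : ℝ)..c, f (d + x) := fun d ↦ by
    simp [integral_comp_add_left]
  rw [hshift, hshift]
  refine integral_mono_on hc (hint a le_rfl) (hint b hab) fun x hx ↦ ?_
  exact hf (mem_Ici.2 (by linarith [hx.1])) (mem_Ici.2 (by linarith [hx.1])) (by linarith)

theorem MonotoneOn.intervalIntegral_le_sub_mul {f : ℝ → ℝ} {a b : ℝ}
    (hf : MonotoneOn f (Icc a b)) (hab : a ≤ b) :
    ∫ x in a..b, f x ≤ (b - a) * f b := by
  have hle : ∫ x in a..b, f x ≤ ∫ _ in a..b, f b :=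
    integral_mono_on hab (uIcc_of_le hab ▸ hf).intervalIntegrable intervalIntegrable_const
      fun x hx ↦ hf hx (right_mem_Icc.2 hab) hx.2
  simpa using hle

theorem MonotoneOn.intervalIntegrable_of_Ici {f : ℝ → ℝ} {a b c : ℝ} (hf : MonotoneOn f (Ici c))
    (ha : c ≤ a) (hb : c ≤ b) : IntervalIntegrable f volume a b :=
  (hf.mono fun _ hx ↦ le_trans (le_min ha hb) hx.1).intervalIntegrable

section SecondDifference

variable {φ : ℝ → ℝ} {ε : ℝ}

theorem MonotoneOn.intervalIntegrable_comp_add_right (hφ : MonotoneOn φ (Ici 0)) (hε : 0 ≤ ε)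
    {a b : ℝ} (ha : 0 ≤ a) (hb : 0 ≤ b) :
    IntervalIntegrable (fun u ↦ φ (u + ε)) volume a b :=
  MonotoneOn.intervalIntegrable_of_Ici (c := 0)
    (fun x hx y hy hxy ↦ hφ (mem_Ici.2 (by linarith [mem_Ici.1 hx]))
      (mem_Ici.2 (by linarith [mem_Ici.1 hy])) (by linarith))
    ha hb

theorem MonotoneOn.intervalIntegrable_comp_sub_right (hφ : MonotoneOn φ (Ici 0))
    {a b : ℝ} (ha : ε ≤ a) (hb : ε ≤ b) :
    IntervalIntegrable (fun u ↦ φ (u - ε)) volume a b :=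
  MonotoneOn.intervalIntegrable_of_Ici (c := ε)
    (fun x hx y hy hxy ↦ hφ (mem_Ici.2 (by linarith [mem_Ici.1 hx]))
      (mem_Ici.2 (by linarith [mem_Ici.1 hy])) (by linarith))
    ha hb

theorem MonotoneOn.intervalIntegrable_second_difference (hφ : MonotoneOn φ (Ici 0)) (hε : 0 ≤ ε)
    {a b : ℝ} (ha : ε ≤ a) (hb : ε ≤ b) :
    IntervalIntegrable (fun u ↦ 2 * φ u - φ (u + ε) - φ (u - ε)) volume a b :=
  (((hφ.intervalIntegrable_of_Ici (hε.trans ha) (hε.trans hb)).const_mul 2).sub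
    (hφ.intervalIntegrable_comp_add_right hε (hε.trans ha) (hε.trans hb))).sub
    (hφ.intervalIntegrable_comp_sub_right ha hb)

theorem MonotoneOn.integral_second_difference_le (hφ : MonotoneOn φ (Ici 0)) (h0 : φ 0 = 0)
    (hε : 0 ≤ ε) {t : ℝ} (ht : ε ≤ t) :
    ∫ u in ε..t, (2 * φ u - φ (u + ε) - φ (u - ε)) ≤ ε * φ (2 * ε) := by
  have hI : ∀ {a b : ℝ}, 0 ≤ a → 0 ≤ b → IntervalIntegrable φ volume a b :=
    hφ.intervalIntegrable_of_Ici
  have ht0 : 0 ≤ t := hε.trans ht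
  have hfwd := integral_sub_comp_add_right (c := ε) (hI hε ht0) (hI (by linarith) (by linarith))
    (hI hε (by linarith))
  have hbwd := integral_sub_comp_add_right (c := -ε) (hI hε ht0) (hI (by linarith) (by linarith))
    (hI hε (by linarith))
  simp only [← sub_eq_add_neg, sub_self] at hbwd
  have hsplit : ∫ u in ε..t, (2 * φ u - φ (u + ε) - φ (u - ε)) =
      (∫ u in ε..t, (φ u - φ (u + ε))) + ∫ u in ε..t, (φ u - φ (u - ε)) := by
    rw [← integral_add ((hI hε ht0).sub (hφ.intervalIntegrable_comp_add_right hε hε ht0))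
      ((hI hε ht0).sub (hφ.intervalIntegrable_comp_sub_right le_rfl ht))]
    exact integral_congr fun u _ ↦ by ring
  have hwindow : ∫ x in t - ε..t, φ x ≤ ∫ x in t..t + ε, φ x := by
    simpa using (hφ.mono (Ici_subset_Ici.2 (sub_nonneg.2 ht))).integral_add_le_integral_add
      (sub_le_self t hε) hε
  have hfirst : ∫ x in ε..ε + ε, φ x ≤ ε * φ (2 * ε) := by
    simpa [two_mul] using (hφ.mono fun x hx ↦ hε.trans hx.1).intervalIntegral_le_sub_mul
      (le_add_of_nonneg_right hε)
  have hinit : 0 ≤ ∫ x in (0 : ℝ)..ε, φ x :=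
    integral_nonneg hε fun u hu ↦ h0 ▸ hφ self_mem_Ici hu.1 hu.1
  rw [hsplit, hfwd, hbwd, integral_symm 0 ε, integral_symm (t - ε) t]
  linarith

end SecondDifference

theorem stmt10_general (T ε : ℝ) (hε : ε ∈ Ioo 0 T)
    (φ : ℝ → ℝ)
    (hmono : MonotoneOn φ (Ici 0))
    (hconc : ConcaveOn ℝ (Ici 0) φ)
    (h0 : φ 0 = 0) :
    (∀ s t : ℝ, 0 ≤ s → s ≤ t - ε →
      0 ≤ 2 * φ (t - s) - φ (t - s + ε) - φ (t - s - ε)) ∧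
    (∫ t in ε..T, ∫ s in (0:ℝ)..(t - ε),
        (2 * φ (t - s) - φ (t - s + ε) - φ (t - s - ε)))
      ≤ T * ε * φ (2 * ε) := by
  obtain ⟨hε0, hεT⟩ := hε
  refine ⟨fun s t hs hst ↦ ?_, ?_⟩
  · have := hconc.add_le_two_mul (x := t - s) (h := ε) (mem_Ici.2 (by linarith))
      (mem_Ici.2 (by linarith))
    linarith
  set g : ℝ → ℝ := fun u ↦ 2 * φ u - φ (u + ε) - φ (u - ε)
  have hinner : ∀ t, ∫ s in (0 : ℝ)..t - ε, g (t - s) = ∫ u in ε..t, g u := fun t ↦ by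
    simp [integral_comp_sub_left]
  have hprimitive : IntervalIntegrable (fun t ↦ ∫ u in ε..t, g u) volume ε T :=
    (continuousOn_primitive_interval'
      (hmono.intervalIntegrable_second_difference hε0.le le_rfl hεT.le)
      left_mem_uIcc).intervalIntegrable
  have hφ2ε : 0 ≤ φ (2 * ε) := h0 ▸ hmono self_mem_Ici (mem_Ici.2 (by linarith)) (by linarith)
  calc ∫ t in ε..T, ∫ s in (0 : ℝ)..t - ε, g (t - s)
      = ∫ t in ε..T, ∫ u in ε..t, g u := by simp only [hinner]
    _ ≤ ∫ _ in ε..T, ε * φ (2 * ε) :=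
        integral_mono_on hεT.le hprimitive intervalIntegrable_const fun t ht ↦
          hmono.integral_second_difference_le h0 hε0.le ht.1
    _ = (T - ε) * (ε * φ (2 * ε)) := by rw [intervalIntegral.integral_const, smul_eq_mul]
    _ ≤ T * ε * φ (2 * ε) := by
        rw [mul_assoc]
        exact mul_le_mul_of_nonneg_right (by linarith) (mul_nonneg hε0.le hφ2ε)

theorem stmt10 (T ε : ℝ) (hT : 0 < T) (hε : ε ∈ Ioo 0 T)
    (φ : ℝ → ℝ)
    (hmono : MonotoneOn φ (Ici 0))
    (hconc : ConcaveOn ℝ (Ici 0) φ)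
    (h0 : φ 0 = 0) :
    (∀ s t : ℝ, 0 ≤ s → s ≤ t - ε →
      0 ≤ 2 * φ (t - s) - φ (t - s + ε) - φ (t - s - ε)) ∧
    (∫ t in ε..T, ∫ s in (0:ℝ)..(t - ε),
        (2 * φ (t - s) - φ (t - s + ε) - φ (t - s - ε)))
      ≤ T * ε * φ (2 * ε) :=
  stmt10_general T ε hε φ hmono hconc h0
end

section
/- Fix H ∈ (0,1/2) and define, for 0 ≤ s ≤ t, δ²_{RL}(s,t) := ∫_0^s ((t−r)^{H−1/2} − (s−r)^{H−1/2})² dr + ∫_s^t (t−r)^{2H−1} dr. Then there exists a constant C_H ≥ 1, depending only on H, such that for all 0 ≤ s ≤ t: (t−s)^{2H} ≤ δ²_{RL}(s,t) ≤ C_H·(t−s)^{2H}. -/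
open Set MeasureTheory intervalIntegral

/-- Squared canonical metric of the Riemann–Liouville fractional Brownian motion
with Hurst parameter `H`, for `0 ≤ s ≤ t`. -/
noncomputable def delta2RL (H s t : ℝ) : ℝ :=
  (∫ r in (0:ℝ)..s, ((t - r) ^ (H - 1/2) - (s - r) ^ (H - 1/2)) ^ 2)
    + ∫ r in s..t, (t - r) ^ (2 * H - 1)

private lemma rl_aux {p : ℝ} (hp : -1 < p) (c a b : ℝ) :
    ∫ r in a..b, (c - r) ^ p = ((c - a) ^ (p + 1) - (c - b) ^ (p + 1)) / (p + 1) := by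
  rw [intervalIntegral.integral_comp_sub_left (fun u => u ^ p) c,
    integral_rpow (Or.inl hp)]

theorem stmt12 (H : ℝ) (hH : H ∈ Ioo (0:ℝ) (1/2)) :
    ∃ C : ℝ, 1 ≤ C ∧ ∀ s t : ℝ, 0 ≤ s → s ≤ t →
      (t - s) ^ (2 * H) ≤ delta2RL H s t ∧
      delta2RL H s t ≤ C * (t - s) ^ (2 * H) := by
  obtain ⟨hH0, hH1⟩ := hH
  have h2H : 0 < 2 * H := by linarith
  have hexp : (-1 : ℝ) < 2 * H - 1 := by linarith
  have hexp' : 2 * H - 1 < 0 := by linarith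
  have hsq : ∀ x : ℝ, 0 ≤ x → x ^ (2 * H - 1) = (x ^ (H - 1/2)) ^ 2 := by
    intro x hx
    rw [show (2 * H - 1) = (H - 1/2) + (H - 1/2) by ring,
      Real.rpow_add' hx (ne_of_lt (by linarith)), sq]
  refine ⟨1 / H, by rw [le_div_iff₀ hH0]; linarith, fun s t hs hst => ?_⟩
  have hts : (0:ℝ) ≤ t - s := by linarith
  have ht : (0:ℝ) ≤ t := by linarith
  have hA : (0:ℝ) ≤ (t - s) ^ (2 * H) := Real.rpow_nonneg hts _
  -- second integral
  have hI2 : ∫ r in s..t, (t - r) ^ (2 * H - 1) = (t - s) ^ (2 * H) / (2 * H) := by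
    rw [rl_aux hexp]
    simp [Real.zero_rpow (ne_of_gt h2H), show 2 * H - 1 + 1 = 2 * H by ring]
  -- nonnegativity of first integral
  have hFnn : 0 ≤ ∫ r in (0:ℝ)..s, ((t - r) ^ (H - 1/2) - (s - r) ^ (H - 1/2)) ^ 2 :=
    intervalIntegral.integral_nonneg hs (fun u _ => sq_nonneg _)
  constructor
  · unfold delta2RL
    rw [hI2]
    have : (t - s) ^ (2 * H) ≤ (t - s) ^ (2 * H) / (2 * H) := by
      rw [le_div_iff₀ h2H]; nlinarith
    linarith
  · -- upper bound
    -- integrability of the comparison functions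
    have hgs : IntervalIntegrable (fun r => (s - r) ^ (2 * H - 1)) volume 0 s := by
      have := (intervalIntegrable_rpow' hexp (a := s) (b := 0)).comp_sub_left s
      simpa using this
    have hgt : IntervalIntegrable (fun r => (t - r) ^ (2 * H - 1)) volume 0 s := by
      have := (intervalIntegrable_rpow' hexp (a := t) (b := t - s)).comp_sub_left t
      simpa using this
    have hps : IntervalIntegrable (fun r => (s - r) ^ (H - 1/2)) volume 0 s := by
      have := (intervalIntegrable_rpow' (show (-1:ℝ) < H - 1/2 by linarith)
        (a := s) (b := 0)).comp_sub_left s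
      simpa using this
    have hpt : IntervalIntegrable (fun r => (t - r) ^ (H - 1/2)) volume 0 s := by
      have := (intervalIntegrable_rpow' (show (-1:ℝ) < H - 1/2 by linarith)
        (a := t) (b := t - s)).comp_sub_left t
      simpa using this
    -- integrability of the squared difference
    have hf : IntervalIntegrable
        (fun r => ((t - r) ^ (H - 1/2) - (s - r) ^ (H - 1/2)) ^ 2) volume 0 s := by
      refine (hgs.add hgt).mono_fun
        ((hpt.aestronglyMeasurable.sub hps.aestronglyMeasurable).pow 2 |>.mono_measure
          (by rw [uIoc_of_le hs])) ?_
      rw [uIoc_of_le hs]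
      filter_upwards [ae_restrict_mem measurableSet_Ioc] with r hr
      have hr1 : (0:ℝ) ≤ s - r := by linarith [hr.2]
      have hr2 : (0:ℝ) ≤ t - r := by linarith [hr.2]
      have ha : (0:ℝ) ≤ (t - r) ^ (H - 1/2) := Real.rpow_nonneg hr2 _
      have hb : (0:ℝ) ≤ (s - r) ^ (H - 1/2) := Real.rpow_nonneg hr1 _
      rw [hsq _ hr1, hsq _ hr2]
      simp only [Real.norm_eq_abs]
      rw [abs_of_nonneg (sq_nonneg ((t - r) ^ (H - 1/2) - (s - r) ^ (H - 1/2))),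
        abs_of_nonneg (by positivity :
          (0:ℝ) ≤ ((s - r) ^ (H - 1/2)) ^ 2 + ((t - r) ^ (H - 1/2)) ^ 2)]
      nlinarith [mul_nonneg ha hb]
    -- pointwise a.e. bound on Icc
    have hmono : (∫ r in (0:ℝ)..s, ((t - r) ^ (H - 1/2) - (s - r) ^ (H - 1/2)) ^ 2)
        ≤ ∫ r in (0:ℝ)..s, ((s - r) ^ (2 * H - 1) - (t - r) ^ (2 * H - 1)) := by
      refine intervalIntegral.integral_mono_ae_restrict hs hf (hgs.sub hgt) ?_
      have hne : ∀ᵐ r : ℝ ∂volume, r ≠ s := by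
        refine ae_iff.mpr ?_
        have : {x : ℝ | ¬ x ≠ s} = {s} := by ext x; simp
        rw [this]; exact Real.volume_singleton
      filter_upwards [ae_restrict_mem measurableSet_Icc, ae_restrict_of_ae hne] with r hr hrs
      have hrange : 0 < s - r := lt_of_le_of_ne (by linarith [hr.2]) (by
        intro h; exact hrs (by linarith [h]))
      have hr2 : 0 < t - r := by linarith
      have hab : (t - r) ^ (H - 1/2) ≤ (s - r) ^ (H - 1/2) :=
        Real.rpow_le_rpow_of_nonpos hrange (by linarith) (by linarith)
      have ha : (0:ℝ) ≤ (t - r) ^ (H - 1/2) := Real.rpow_nonneg hr2.le _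
      rw [hsq _ hrange.le, hsq _ hr2.le]
      nlinarith [mul_nonneg ha (sub_nonneg.2 hab)]
    -- compute the comparison integral
    have hcomp : (∫ r in (0:ℝ)..s, ((s - r) ^ (2 * H - 1) - (t - r) ^ (2 * H - 1)))
        = (s ^ (2 * H) - 0 ^ (2 * H)) / (2 * H)
          - (t ^ (2 * H) - (t - s) ^ (2 * H)) / (2 * H) := by
      rw [intervalIntegral.integral_sub hgs hgt, rl_aux hexp, rl_aux hexp]
      simp [show 2 * H - 1 + 1 = 2 * H by ring]
    have hst2 : s ^ (2 * H) ≤ t ^ (2 * H) := Real.rpow_le_rpow hs hst h2H.le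
    have hF : (∫ r in (0:ℝ)..s, ((t - r) ^ (H - 1/2) - (s - r) ^ (H - 1/2)) ^ 2)
        ≤ (t - s) ^ (2 * H) / (2 * H) := by
      rw [hcomp] at hmono
      rw [Real.zero_rpow (ne_of_gt h2H)] at hmono
      have : (s ^ (2 * H) - 0) / (2 * H) - (t ^ (2 * H) - (t - s) ^ (2 * H)) / (2 * H)
          ≤ (t - s) ^ (2 * H) / (2 * H) := by
        rw [div_sub_div_same, div_le_div_iff_of_pos_right h2H] at *
        · linarith
      linarith
    unfold delta2RL
    rw [hI2]
    have : (t - s) ^ (2 * H) / (2 * H) + (t - s) ^ (2 * H) / (2 * H)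
        = 1 / H * (t - s) ^ (2 * H) := by field_simp; ring
    linarith
end

section
/- Let m ≥ 3 be an odd integer, α := 1/(2m) − 1/2, and T > 0. Let f : [0,∞) → [0,∞) be nondecreasing and concave with lim_{r→0⁺} f(r) = 0, and let F : {(t,s) : 0 ≤ s < t} → [0,∞) satisfy: F(t,s) ≤ f(t−s); t ↦ F(t,s) is nondecreasing; and t ↦ (t−s)^α F(t,s) is nonincreasing on (s,∞). Define G̃(t,r) := 1_{r≤t}·(t−r)^α·F(t,r). Then sup_{s∈[0,T]} ∫_0^{s+ε} (G̃(s+ε,r) − G̃(s,r))² dr = o(ε^{1/m}) as ε → 0⁺, i.e. lim_{ε→0⁺} ε^{−1/m} · sup_{s∈[0,T]} ∫_0^{s+ε} (G̃(s+ε,r) − G̃(s,r))² dr = 0. -/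
/-!
Write `t = s + ε`. For `r ∈ (s, t)` only `G̃(t, r)` is nonzero; it is at most `f(ε) (t - r)^α`,
whose square integrates to `f(ε)² ε^(2α+1) / (2α+1)`. For `r < s` the monotonicity of `F(·, r)`
and of `(· - r)^α F(·, r)` bound the increment by `((s - r)^α - (t - r)^α) f(t - r)`. Fix `δ ≥ ε`.
Where `s - r ≤ δ` the factor `f` is at most `f(2δ)`, and `∫ (u^α - (u + ε)^α)² du ≤ C_α ε^(2α+1)`
(compare with `u^(2α)` on `(0, ε)` and, by the mean value theorem, with `α² ε² u^(2α-2)` beyond).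
Where `s - r > δ` the mean value theorem bounds that part by `O_δ(ε²) = o(ε^(2α+1))`, as `α < 1/2`.
So `ε^-(2α+1) δ̃²` is eventually below `C_α f(2δ)² + o(1)`, and `f(2δ) → 0` as `δ → 0`.
For `α = 1/(2m) - 1/2` the exponent `2α + 1` is `1/m`.
-/

open Set MeasureTheory Filter Topology intervalIntegral

/-- Adapted Volterra kernel of Riemann–Liouville type with singularity exponent `α`
modulated by the factor `F`: `G̃(t,r) := 1_{r ≤ t} (t-r)^α F(t,r)`. -/
noncomputable def volterraKernel (α : ℝ) (F : ℝ → ℝ → ℝ) (t r : ℝ) : ℝ :=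
  if r ≤ t then (t - r) ^ α * F t r else 0

open scoped Interval

lemma rpow_sub_rpow_add_le {α u ε : ℝ} (hα : α ≤ 0) (hu : 0 < u) (hε : 0 ≤ ε) :
    u ^ α - (u + ε) ^ α ≤ -α * ε * u ^ (α - 1) := by
  have hcont : ContinuousOn (fun x : ℝ => x ^ α) (Ici u) := fun x hx =>
    (Real.continuousAt_rpow_const x α (Or.inl (hu.trans_le hx).ne')).continuousWithinAt
  have hdiff : DifferentiableOn ℝ (fun x : ℝ => x ^ α) (interior (Ici u)) := by
    rw [interior_Ici]
    exact fun x hx =>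
      (Real.differentiableAt_rpow_const_of_ne α (hu.trans hx).ne').differentiableWithinAt
  have hderiv : ∀ x ∈ interior (Ici u), α * u ^ (α - 1) ≤ deriv (fun x => x ^ α) x := by
    rw [interior_Ici]
    intro x hx
    rw [Real.deriv_rpow_const]
    exact mul_le_mul_of_nonpos_left
      (Real.rpow_le_rpow_of_nonpos hu hx.le (by linarith)) hα
  have := (convex_Ici u).mul_sub_le_image_sub_of_le_deriv hcont hdiff hderiv u self_mem_Ici
    (u + ε) (by simpa using hε) (by linarith)
  rw [add_sub_cancel_left] at this
  linarith

lemma rpow_sub_rpow_add_nonneg {α u ε : ℝ} (hα : α ≤ 0) (hu : 0 < u) (hε : 0 ≤ ε) :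
    0 ≤ u ^ α - (u + ε) ^ α :=
  sub_nonneg.2 (Real.rpow_le_rpow_of_nonpos hu (by linarith) hα)

lemma sq_rpow_sub_rpow_add_le_rpow {α u ε : ℝ} (hα : α ≤ 0) (hu : 0 < u) (hε : 0 ≤ ε) :
    (u ^ α - (u + ε) ^ α) ^ 2 ≤ u ^ (2 * α) := by
  rw [mul_comm, Real.rpow_mul hu.le, Real.rpow_two]
  exact pow_le_pow_left₀ (rpow_sub_rpow_add_nonneg hα hu hε)
    (sub_le_self _ (Real.rpow_nonneg (by linarith) α)) 2

lemma sq_rpow_sub_rpow_add_le {α u ε : ℝ} (hα : α ≤ 0) (hu : 0 < u) (hε : 0 ≤ ε) :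
    (u ^ α - (u + ε) ^ α) ^ 2 ≤ α ^ 2 * ε ^ 2 * u ^ (2 * α - 2) := by
  calc (u ^ α - (u + ε) ^ α) ^ 2 ≤ (-α * ε * u ^ (α - 1)) ^ 2 :=
        pow_le_pow_left₀ (rpow_sub_rpow_add_nonneg hα hu hε) (rpow_sub_rpow_add_le hα hu hε) 2
    _ = α ^ 2 * ε ^ 2 * u ^ (2 * α - 2) := by
        rw [show 2 * α - 2 = (α - 1) * 2 by ring, Real.rpow_mul hu.le, Real.rpow_two]
        ring

lemma integral_sub_rpow {β : ℝ} (hβ : -1 < β) (a b : ℝ) :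
    ∫ r in a..b, (b - r) ^ β = (b - a) ^ (β + 1) / (β + 1) := by
  rw [integral_comp_sub_left (fun x => x ^ β), sub_self, integral_rpow (Or.inl hβ),
    Real.zero_rpow (by linarith), sub_zero]

lemma intervalIntegrable_sq_rpow_sub_rpow_add {α ε b : ℝ} (hα : -1 / 2 < α) (hα0 : α ≤ 0)
    (hε : 0 ≤ ε) (hb : 0 ≤ b) :
    IntervalIntegrable (fun u => (u ^ α - (u + ε) ^ α) ^ 2) volume 0 b := by
  refine (intervalIntegrable_rpow' (r := 2 * α) (by linarith)).mono_fun (by fun_prop) ?_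
  rw [uIoc_of_le hb]
  refine (ae_restrict_mem measurableSet_Ioc).mono fun u hu => ?_
  dsimp only
  rw [Real.norm_of_nonneg (sq_nonneg _), Real.norm_of_nonneg (Real.rpow_nonneg hu.1.le _)]
  exact sq_rpow_sub_rpow_add_le_rpow hα0 hu.1 hε

lemma integral_rpow_le_of_lt_neg_one {β a b : ℝ} (hβ : β < -1) (ha : 0 < a) (hab : a ≤ b) :
    ∫ u in a..b, u ^ β ≤ a ^ (β + 1) / -(β + 1) := by
  have h0 : (0 : ℝ) ∉ [[a, b]] := by
    rw [uIcc_of_le hab]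
    exact fun h => ha.not_ge h.1
  rw [integral_rpow (Or.inr ⟨hβ.ne, h0⟩), div_neg, ← neg_div]
  exact div_le_div_of_nonpos_of_le (by linarith)
    (by linarith [Real.rpow_nonneg (ha.le.trans hab) (β + 1)])

lemma integral_sq_rpow_sub_rpow_add_le {α ε s : ℝ} (hα : -1 / 2 < α) (hα0 : α ≤ 0)
    (hε : 0 < ε) (hs : 0 ≤ s) :
    ∫ u in 0..s, (u ^ α - (u + ε) ^ α) ^ 2
      ≤ (1 / (2 * α + 1) + α ^ 2 / (1 - 2 * α)) * ε ^ (2 * α + 1) := by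
  set g : ℝ → ℝ := fun u => (u ^ α - (u + ε) ^ α) ^ 2
  have hg_int : IntervalIntegrable g volume 0 (s + ε) :=
    intervalIntegrable_sq_rpow_sub_rpow_add hα hα0 hε.le (by linarith)
  have hεs : ε ≤ s + ε := by linarith
  have hε_mem : ε ∈ [[0, s + ε]] := by
    rw [uIcc_of_le (by linarith)]
    exact ⟨hε.le, hεs⟩
  have hg_int_left := hg_int.mono_set (uIcc_subset_uIcc_left hε_mem)
  have hg_int_right := hg_int.mono_set (uIcc_subset_uIcc_right hε_mem)
  have hpow_int : IntervalIntegrable (fun u => u ^ (2 * α - 2)) volume ε (s + ε) :=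
    (continuousOn_id.rpow_const fun u hu => Or.inl (hε.trans_le (by
      rw [uIcc_of_le hεs] at hu; exact hu.1)).ne').intervalIntegrable
  calc ∫ u in 0..s, g u
      ≤ ∫ u in 0..s + ε, g u :=
        integral_mono_interval le_rfl hs (by linarith) (Eventually.of_forall fun _ => sq_nonneg _)
          hg_int
    _ = (∫ u in 0..ε, g u) + ∫ u in ε..s + ε, g u :=
        (integral_add_adjacent_intervals hg_int_left hg_int_right).symm
    _ ≤ (∫ u in 0..ε, u ^ (2 * α)) + ∫ u in ε..s + ε, α ^ 2 * ε ^ 2 * u ^ (2 * α - 2) := by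
        gcongr ?_ + ?_
        · exact integral_mono_on_of_le_Ioo hε.le hg_int_left
            (intervalIntegrable_rpow' (by linarith))
            fun u hu => sq_rpow_sub_rpow_add_le_rpow hα0 hu.1 hε.le
        · exact integral_mono_on hεs hg_int_right (hpow_int.const_mul _)
            fun u hu => sq_rpow_sub_rpow_add_le hα0 (hε.trans_le hu.1) hε.le
    _ ≤ ε ^ (2 * α + 1) / (2 * α + 1) + α ^ 2 * ε ^ 2 * (ε ^ (2 * α - 1) / (1 - 2 * α)) := by
        rw [integral_rpow (Or.inl (by linarith)), Real.zero_rpow (by linarith), sub_zero,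
          intervalIntegral.integral_const_mul]
        gcongr
        exact (integral_rpow_le_of_lt_neg_one (by linarith) hε hεs).trans_eq (by ring_nf)
    _ = (1 / (2 * α + 1) + α ^ 2 / (1 - 2 * α)) * ε ^ (2 * α + 1) := by
        rw [show ε ^ (2 * α + 1) = ε ^ 2 * ε ^ (2 * α - 1) by
          rw [← Real.rpow_two, ← Real.rpow_add hε]; ring_nf]
        ring

-- `f` need not be integrable (no measurability of `F` is assumed); then its integral is the
-- junk value `0`.
lemma integral_le_add_of_le_Ioo {f g₁ g₂ : ℝ → ℝ} {a b c : ℝ} (hab : a ≤ b) (hbc : b ≤ c)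
    (hf : ∀ x, 0 ≤ f x) (hg₁ : IntervalIntegrable g₁ volume a b)
    (hg₂ : IntervalIntegrable g₂ volume b c) (h₁ : ∀ x ∈ Ioo a b, f x ≤ g₁ x)
    (h₂ : ∀ x ∈ Ioo b c, f x ≤ g₂ x) :
    ∫ x in a..c, f x ≤ (∫ x in a..b, g₁ x) + ∫ x in b..c, g₂ x := by
  by_cases hfi : IntervalIntegrable f volume a c
  · have hb : b ∈ [[a, c]] := by
      rw [uIcc_of_le (hab.trans hbc)]
      exact ⟨hab, hbc⟩
    have hf₁ := hfi.mono_set (uIcc_subset_uIcc_left hb)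
    have hf₂ := hfi.mono_set (uIcc_subset_uIcc_right hb)
    rw [← integral_add_adjacent_intervals hf₁ hf₂]
    exact add_le_add (integral_mono_on_of_le_Ioo hab hf₁ hg₁ h₁)
      (integral_mono_on_of_le_Ioo hbc hf₂ hg₂ h₂)
  · rw [integral_undef hfi]
    have h₁' := integral_mono_on_of_le_Ioo hab intervalIntegrable_const hg₁
      fun x hx => (hf x).trans (h₁ x hx)
    have h₂' := integral_mono_on_of_le_Ioo hbc intervalIntegrable_const hg₂
      fun x hx => (hf x).trans (h₂ x hx)
    rw [intervalIntegral.integral_const, smul_zero] at h₁' h₂'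
    exact add_nonneg h₁' h₂'

lemma tendsto_nhds_zero_of_le_add {ι X : Type*} {L : Filter ι} [L.NeBot] {l : Filter X}
    {φ : X → ℝ} {c : ι → ℝ} {B : ι → X → ℝ} (hφ : ∀ᶠ x in l, 0 ≤ φ x)
    (hc : Tendsto c L (𝓝 0))
    (hB : ∀ᶠ i in L, Tendsto (B i) l (𝓝 0) ∧ ∀ᶠ x in l, φ x ≤ c i + B i x) :
    Tendsto φ l (𝓝 0) := by
  refine tendsto_order.2 ⟨fun a ha => hφ.mono fun x hx => ha.trans_le hx, fun a ha => ?_⟩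
  obtain ⟨i, hci, hBi, hle⟩ := ((hc.eventually (gt_mem_nhds (half_pos ha))).and hB).exists
  filter_upwards [hBi.eventually (gt_mem_nhds (half_pos ha)), hle] with x hBx hφx
  linarith

lemma sq_volterraKernel_sub_le {α : ℝ} {F : ℝ → ℝ → ℝ} {s t r b : ℝ} (hα : α ≤ 0)
    (hrs : r < s) (hst : s ≤ t) (hmono : F s r ≤ F t r)
    (hanti : (t - r) ^ α * F t r ≤ (s - r) ^ α * F s r) (hb : F t r ≤ b) :
    (volterraKernel α F t r - volterraKernel α F s r) ^ 2
      ≤ (((s - r) ^ α - (t - r) ^ α) * b) ^ 2 := by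
  have hX : 0 ≤ (s - r) ^ α - (t - r) ^ α :=
    sub_nonneg.2 (Real.rpow_le_rpow_of_nonpos (by linarith) (by linarith) hα)
  have hmono' : (s - r) ^ α * F s r ≤ (s - r) ^ α * F t r :=
    mul_le_mul_of_nonneg_left hmono (Real.rpow_nonneg (by linarith) α)
  have hb' := mul_le_mul_of_nonneg_left hb hX
  rw [volterraKernel, volterraKernel, if_pos (by linarith), if_pos hrs.le]
  apply sq_le_sq' <;> nlinarith

structure IsVolterraModulation (α : ℝ) (f : ℝ → ℝ) (F : ℝ → ℝ → ℝ) : Prop where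
  nonneg : ∀ t s, 0 ≤ s → s < t → 0 ≤ F t s
  le : ∀ t s, 0 ≤ s → s < t → F t s ≤ f (t - s)
  monotoneOn : ∀ s, 0 ≤ s → MonotoneOn (fun t => F t s) (Ioi s)
  antitoneOn : ∀ s, 0 ≤ s → AntitoneOn (fun t => (t - s) ^ α * F t s) (Ioi s)

namespace IsVolterraModulation

variable {α : ℝ} {f : ℝ → ℝ} {F : ℝ → ℝ → ℝ}

lemma sq_volterraKernel_sub_le_of_lt (hF : IsVolterraModulation α f F)
    (hf : MonotoneOn f (Ici 0)) (hα : α ≤ 0) {s ε δ T r : ℝ} (hε : 0 < ε) (hεδ : ε ≤ δ)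
    (hsT : s ≤ T) (hr : 0 ≤ r) (hrs : r < s) :
    (volterraKernel α F (s + ε) r - volterraKernel α F s r) ^ 2
      ≤ f (2 * δ) ^ 2 * ((s - r) ^ α - (s - r + ε) ^ α) ^ 2
        + f (T + δ) ^ 2 * α ^ 2 * δ ^ (2 * α - 2) * ε ^ 2 := by
  have hrt : r < s + ε := by linarith
  have hsub : s + ε - r = s - r + ε := by ring
  have hbd := sq_volterraKernel_sub_le hα hrs (by linarith)
    (hF.monotoneOn r hr hrs hrt (by linarith)) (hF.antitoneOn r hr hrs hrt (by linarith))
    (hF.le (s + ε) r hr hrt)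
  have hf_nn : 0 ≤ f (s - r + ε) := hsub ▸ (hF.nonneg _ r hr hrt).trans (hF.le _ r hr hrt)
  rw [hsub, mul_pow] at hbd
  have hu : 0 < s - r := by linarith
  have hX := sq_nonneg ((s - r) ^ α - (s - r + ε) ^ α)
  have hδ_pow := Real.rpow_nonneg (hε.le.trans hεδ) (2 * α - 2)
  have hK : 0 ≤ f (T + δ) ^ 2 * α ^ 2 * δ ^ (2 * α - 2) * ε ^ 2 := by positivity
  rcases le_or_gt (s - r) δ with hnear | hfar
  · have hf_le : f (s - r + ε) ≤ f (2 * δ) :=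
      hf (by simp; linarith) (by simp; linarith) (by linarith)
    calc _ ≤ ((s - r) ^ α - (s - r + ε) ^ α) ^ 2 * f (s - r + ε) ^ 2 := hbd
      _ ≤ ((s - r) ^ α - (s - r + ε) ^ α) ^ 2 * f (2 * δ) ^ 2 := by gcongr
      _ ≤ _ := by linarith
  · have hf_le : f (s - r + ε) ≤ f (T + δ) :=
      hf (by simp; linarith) (by simp; linarith) (by linarith)
    have hpow : (s - r) ^ (2 * α - 2) ≤ δ ^ (2 * α - 2) :=
      Real.rpow_le_rpow_of_nonpos (hε.trans_le hεδ) hfar.le (by linarith)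
    calc _ ≤ ((s - r) ^ α - (s - r + ε) ^ α) ^ 2 * f (s - r + ε) ^ 2 := hbd
      _ ≤ (α ^ 2 * ε ^ 2 * δ ^ (2 * α - 2)) * f (T + δ) ^ 2 := by
        refine mul_le_mul ((sq_rpow_sub_rpow_add_le hα hu hε.le).trans (by gcongr))
          (pow_le_pow_left₀ hf_nn hf_le 2) (sq_nonneg _) (by positivity)
      _ ≤ _ := by linarith [mul_nonneg (sq_nonneg (f (2 * δ))) hX]

lemma sq_volterraKernel_sub_le_of_gt (hF : IsVolterraModulation α f F)
    (hf : MonotoneOn f (Ici 0)) {s ε r : ℝ} (hs : 0 ≤ s) (hsr : s < r) (hrt : r < s + ε) :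
    (volterraKernel α F (s + ε) r - volterraKernel α F s r) ^ 2
      ≤ f ε ^ 2 * (s + ε - r) ^ (2 * α) := by
  have hr : 0 ≤ r := by linarith
  have hF_le : F (s + ε) r ≤ f ε :=
    (hF.le _ r hr hrt).trans (hf (by simp; linarith) (by simp; linarith) (by linarith))
  rw [volterraKernel, volterraKernel, if_pos hrt.le, if_neg hsr.not_ge, sub_zero, mul_pow,
    mul_comm (2 : ℝ), Real.rpow_mul (by linarith), Real.rpow_two, mul_comm]
  gcongr
  exact hF.nonneg _ r hr hrt

lemma integral_sq_volterraKernel_sub_le (hF : IsVolterraModulation α f F)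
    (hf : MonotoneOn f (Ici 0)) (hα : -1 / 2 < α) (hα0 : α ≤ 0) {s ε δ T : ℝ} (hε : 0 < ε)
    (hεδ : ε ≤ δ) (hs : 0 ≤ s) (hsT : s ≤ T) :
    ∫ r in 0..s + ε, (volterraKernel α F (s + ε) r - volterraKernel α F s r) ^ 2
      ≤ (f (2 * δ) ^ 2 * (1 / (2 * α + 1) + α ^ 2 / (1 - 2 * α)) + f ε ^ 2 / (2 * α + 1))
          * ε ^ (2 * α + 1) + f (T + δ) ^ 2 * α ^ 2 * δ ^ (2 * α - 2) * T * ε ^ 2 := by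
  set g : ℝ → ℝ := fun u => (u ^ α - (u + ε) ^ α) ^ 2
  set K := f (T + δ) ^ 2 * α ^ 2 * δ ^ (2 * α - 2) * ε ^ 2
  have hK : 0 ≤ K := by
    have := Real.rpow_nonneg (hε.le.trans hεδ) (2 * α - 2)
    positivity
  have hg_int : IntervalIntegrable (fun r => g (s - r)) volume 0 s := by
    simpa using ((intervalIntegrable_sq_rpow_sub_rpow_add hα hα0 hε.le hs).comp_sub_left s).symm
  have hpow_int : IntervalIntegrable (fun r => (s + ε - r) ^ (2 * α)) volume s (s + ε) := by
    simpa using ((intervalIntegrable_rpow' (r := 2 * α) (by linarith)).comp_sub_left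
      (s + ε) (a := 0) (b := ε)).symm
  have hbound := integral_le_add_of_le_Ioo hs (by linarith : s ≤ s + ε) (fun _ => sq_nonneg _)
    ((hg_int.const_mul (f (2 * δ) ^ 2)).add intervalIntegrable_const)
    (hpow_int.const_mul (f ε ^ 2))
    (fun r hr => hF.sq_volterraKernel_sub_le_of_lt hf hα0 hε hεδ hsT hr.1.le hr.2)
    (fun r hr => hF.sq_volterraKernel_sub_le_of_gt hf hs hr.1 hr.2)
  have hnear : ∫ r in 0..s, (f (2 * δ) ^ 2 * g (s - r) + K)
      ≤ f (2 * δ) ^ 2 * ((1 / (2 * α + 1) + α ^ 2 / (1 - 2 * α)) * ε ^ (2 * α + 1)) + K * T := by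
    rw [integral_add (hg_int.const_mul _) intervalIntegrable_const,
      intervalIntegral.integral_const_mul, integral_comp_sub_left g s, sub_self, sub_zero, intervalIntegral.integral_const, smul_eq_mul,
      sub_zero, mul_comm s]
    gcongr
    exact integral_sq_rpow_sub_rpow_add_le hα hα0 hε hs
  have hfar : ∫ r in s..s + ε, f ε ^ 2 * (s + ε - r) ^ (2 * α)
      = f ε ^ 2 / (2 * α + 1) * ε ^ (2 * α + 1) := by
    rw [intervalIntegral.integral_const_mul, integral_sub_rpow (by linarith), add_sub_cancel_left]
    ring
  rw [hfar] at hbound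
  linarith

lemma sSup_integral_sq_volterraKernel_sub_le (hF : IsVolterraModulation α f F)
    (hf : MonotoneOn f (Ici 0)) (hα : -1 / 2 < α) (hα0 : α ≤ 0) {ε δ T : ℝ} (hε : 0 < ε)
    (hεδ : ε ≤ δ) (hT : 0 ≤ T) :
    sSup ((fun s => ∫ r in (0:ℝ)..(s + ε),
        (volterraKernel α F (s + ε) r - volterraKernel α F s r) ^ 2) '' Icc 0 T)
      ≤ (f (2 * δ) ^ 2 * (1 / (2 * α + 1) + α ^ 2 / (1 - 2 * α)) + f ε ^ 2 / (2 * α + 1))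
          * ε ^ (2 * α + 1) + f (T + δ) ^ 2 * α ^ 2 * δ ^ (2 * α - 2) * T * ε ^ 2 := by
  refine Real.sSup_le ?_ ?_
  · rintro _ ⟨s, hs, rfl⟩
    exact hF.integral_sq_volterraKernel_sub_le hf hα hα0 hε hεδ hs.1 hs.2
  · exact (integral_nonneg (by linarith) fun _ _ => sq_nonneg _).trans
      (hF.integral_sq_volterraKernel_sub_le hf hα hα0 hε hεδ le_rfl hT)

theorem tendsto_rpow_mul_sSup_integral_sq_volterraKernel_sub (hF : IsVolterraModulation α f F)
    (hf : MonotoneOn f (Ici 0)) (hf_lim : Tendsto f (𝓝[>] 0) (𝓝 0)) (hα : -1 / 2 < α)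
    (hα0 : α ≤ 0) {T : ℝ} (hT : 0 ≤ T) :
    Tendsto (fun ε : ℝ => ε ^ (-(2 * α + 1)) *
        sSup ((fun s => ∫ r in (0:ℝ)..(s + ε),
          (volterraKernel α F (s + ε) r - volterraKernel α F s r) ^ 2) '' Icc 0 T))
      (𝓝[>] 0) (𝓝 0) := by
  set C := 1 / (2 * α + 1) + α ^ 2 / (1 - 2 * α)
  refine tendsto_nhds_zero_of_le_add (L := 𝓝[>] (0 : ℝ)) (c := fun δ => f (2 * δ) ^ 2 * C)
    (B := fun δ ε => f ε ^ 2 / (2 * α + 1)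
      + f (T + δ) ^ 2 * α ^ 2 * δ ^ (2 * α - 2) * T * ε ^ (1 - 2 * α)) ?_ ?_ ?_
  · filter_upwards [self_mem_nhdsWithin] with ε (hε : 0 < ε)
    refine mul_nonneg (Real.rpow_nonneg hε.le _) (Real.sSup_nonneg ?_)
    rintro _ ⟨s, hs, rfl⟩
    exact integral_nonneg (by linarith [hs.1]) fun _ _ => sq_nonneg _
  · have hdouble : Tendsto (fun δ : ℝ => 2 * δ) (𝓝[>] 0) (𝓝[>] 0) :=
      tendsto_nhdsWithin_iff.2
        ⟨((continuous_const_mul 2).tendsto' 0 0 (mul_zero 2)).mono_left nhdsWithin_le_nhds,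
        eventually_nhdsWithin_of_forall fun δ (hδ : 0 < δ) => mul_pos two_pos hδ⟩
    simpa using ((hf_lim.comp hdouble).pow 2).mul_const C
  · filter_upwards [self_mem_nhdsWithin] with δ (hδ : 0 < δ)
    refine ⟨?_, ?_⟩
    · have hpow : Tendsto (fun ε : ℝ => ε ^ (1 - 2 * α)) (𝓝[>] 0) (𝓝 0) := by
        simpa [Real.zero_rpow (by linarith : 1 - 2 * α ≠ 0)] using
          (Real.continuousAt_rpow_const 0 (1 - 2 * α) (Or.inr (by linarith))).tendsto.mono_left
            nhdsWithin_le_nhds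
      simpa using ((hf_lim.pow 2).div_const _).add (hpow.const_mul _)
    · filter_upwards [Ioo_mem_nhdsGT hδ] with ε ⟨hε, hεδ⟩
      have hsup := hF.sSup_integral_sq_volterraKernel_sub_le hf hα hα0 hε hεδ.le hT
      have hcancel : ε ^ (-(2 * α + 1)) * ε ^ (2 * α + 1) = 1 := by
        rw [← Real.rpow_add hε, neg_add_cancel, Real.rpow_zero]
      have hquad : ε ^ (-(2 * α + 1)) * ε ^ 2 = ε ^ (1 - 2 * α) := by
        rw [← Real.rpow_two, ← Real.rpow_add hε]
        ring_nf
      calc _ ≤ ε ^ (-(2 * α + 1)) * ((f (2 * δ) ^ 2 * C + f ε ^ 2 / (2 * α + 1)) * ε ^ (2 * α + 1)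
            + f (T + δ) ^ 2 * α ^ 2 * δ ^ (2 * α - 2) * T * ε ^ 2) :=
          mul_le_mul_of_nonneg_left hsup (Real.rpow_nonneg hε.le _)
        _ = _ := by
          linear_combination (f (2 * δ) ^ 2 * C + f ε ^ 2 / (2 * α + 1)) * hcancel
            + f (T + δ) ^ 2 * α ^ 2 * δ ^ (2 * α - 2) * T * hquad

end IsVolterraModulation

theorem stmt14_general (m : ℕ) (hm3 : 3 ≤ m) (T : ℝ) (hT : 0 < T)
    (f : ℝ → ℝ)
    (hf_mono : MonotoneOn f (Ici 0))
    (hf_lim : Tendsto f (𝓝[>] 0) (𝓝 0))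
    (F : ℝ → ℝ → ℝ)
    (hF_nn : ∀ t s : ℝ, 0 ≤ s → s < t → 0 ≤ F t s)
    (hF_bd : ∀ t s : ℝ, 0 ≤ s → s < t → F t s ≤ f (t - s))
    (hF_mono : ∀ s : ℝ, 0 ≤ s → MonotoneOn (fun t => F t s) (Ioi s))
    (hF_anti : ∀ s : ℝ, 0 ≤ s →
      AntitoneOn (fun t => (t - s) ^ (1 / (2 * (m:ℝ)) - 1/2) * F t s) (Ioi s)) :
    Tendsto (fun ε : ℝ => ε ^ (-(1:ℝ) / (m:ℝ)) *
        sSup ((fun s => ∫ r in (0:ℝ)..(s + ε),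
            (volterraKernel (1 / (2 * (m:ℝ)) - 1/2) F (s + ε) r
              - volterraKernel (1 / (2 * (m:ℝ)) - 1/2) F s r) ^ 2) '' Icc 0 T))
      (𝓝[>] 0) (𝓝 0) := by
  have hm : (1 : ℝ) ≤ m := by exact_mod_cast (by omega : 1 ≤ m)
  have hinv_pos : 0 < 1 / (2 * (m:ℝ)) := by positivity
  have hinv_le : 1 / (2 * (m:ℝ)) ≤ 1 / 2 := by gcongr; linarith
  have hexp : -(2 * (1 / (2 * (m:ℝ)) - 1/2) + 1) = -(1:ℝ) / m := by
    field_simp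
    ring
  have key := IsVolterraModulation.tendsto_rpow_mul_sSup_integral_sq_volterraKernel_sub
    ⟨hF_nn, hF_bd, hF_mono, hF_anti⟩ hf_mono hf_lim (by linarith) (by linarith) hT.le
  rwa [hexp] at key

theorem stmt14 (m : ℕ) (hm3 : 3 ≤ m) (hmodd : Odd m) (T : ℝ) (hT : 0 < T)
    (f : ℝ → ℝ)
    (hf_nn : ∀ r ∈ Ici (0:ℝ), 0 ≤ f r)
    (hf_mono : MonotoneOn f (Ici 0))
    (hf_conc : ConcaveOn ℝ (Ici 0) f)
    (hf_lim : Tendsto f (𝓝[>] 0) (𝓝 0))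
    (F : ℝ → ℝ → ℝ)
    (hF_nn : ∀ t s : ℝ, 0 ≤ s → s < t → 0 ≤ F t s)
    (hF_bd : ∀ t s : ℝ, 0 ≤ s → s < t → F t s ≤ f (t - s))
    (hF_mono : ∀ s : ℝ, 0 ≤ s → MonotoneOn (fun t => F t s) (Ioi s))
    (hF_anti : ∀ s : ℝ, 0 ≤ s →
      AntitoneOn (fun t => (t - s) ^ (1 / (2 * (m:ℝ)) - 1/2) * F t s) (Ioi s)) :
    Tendsto (fun ε : ℝ => ε ^ (-(1:ℝ) / (m:ℝ)) *
        sSup ((fun s => ∫ r in (0:ℝ)..(s + ε),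
            (volterraKernel (1 / (2 * (m:ℝ)) - 1/2) F (s + ε) r
              - volterraKernel (1 / (2 * (m:ℝ)) - 1/2) F s r) ^ 2) '' Icc 0 T))
      (𝓝[>] 0) (𝓝 0) :=
  stmt14_general m hm3 T hT f hf_mono hf_lim F hF_nn hF_bd hF_mono hF_anti
end

section
/- Let m ≥ 3 be an odd integer, α := 1/(2m) − 1/2, and T > 0. Let g(t,s) be defined for 0 ≤ s < t, of the form g(t,s) = (t−s)^α F(t,s) with F nonnegative and bounded (say 0 ≤ F ≤ K), t ↦ F(t,s) nondecreasing, t ↦ g(t,s) nonincreasing, and g differentiable in t with |∂g/∂t(t,s)| ≤ K·(t−s)^{α−1}. Set G̃(t,u) := 1_{u≤t} g(t,u) and, for ε > 0, ΔG̃_t(u) := G̃(t+ε,u) − G̃(t,u). Then there is a constant C (depending on K, α, T) such that for all sufficiently small ε > 0: ∫_{t=2ε}^T ∫_{s=0}^{t−2ε} ∫_{u=0}^T |ΔG̃_t(u)|·|ΔG̃_s(u)| du ds dt ≤ C·ε^{1 + 1/m}. -/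
open Set MeasureTheory Filter Topology intervalIntegral

/-- Adapted Volterra kernel: `G̃(t,u) := 1_{u ≤ t} g(t,u)`. -/
noncomputable def adaptedKernel (g : ℝ → ℝ → ℝ) (t u : ℝ) : ℝ :=
  if u ≤ t then g t u else 0

/-! For `s + 2ε ≤ t` the increment `ΔG̃_s` vanishes beyond `u = s + ε`, and there the mean value
theorem gives `|ΔG̃_t(u)| ≤ ε K (t - ε - s)^(α-1)`. On the other hand `∫ |ΔG̃_s| = O(ε^(α+1))`:
away from the diagonal by the same derivative bound, on the two windows of length `ε` next to it
by `g(t, u) ≤ K (t - u)^α`. Integrating `(t - ε - s)^(α-1)` over `s ≤ t - 2ε` costs `ε^α / |α|`,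
so the triple integral is `O(ε^(2α+2)) = O(ε^(1+1/m))`. -/

/-- No integrability of `f` is needed (a non-integrable `f` has integral `0`): the integrands of
the theorem are not known to be measurable. -/
lemma intervalIntegral_le_of_nonneg_of_le {f g : ℝ → ℝ} {a b : ℝ} (hab : a ≤ b)
    (hf : ∀ x ∈ Ioc a b, 0 ≤ f x) (hg : IntervalIntegrable g volume a b)
    (hfg : ∀ x ∈ Ioc a b, f x ≤ g x) :
    ∫ x in a..b, f x ≤ ∫ x in a..b, g x := by
  rw [integral_of_le hab, integral_of_le hab]
  exact integral_mono_of_nonneg ((ae_restrict_iff' measurableSet_Ioc).2 (.of_forall hf)) hg.1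
    ((ae_restrict_iff' measurableSet_Ioc).2 (.of_forall hfg))

lemma integrableOn_Icc_sub_rpow_of_pos {b c ε r : ℝ} (hε : 0 < ε) :
    IntegrableOn (fun v => (c - v) ^ r) (Icc b (c - ε)) :=
  (ContinuousOn.rpow_const (f := fun v => c - v) (by fun_prop)
    fun v hv => Or.inl (by linarith [hv.2])).integrableOn_Icc

lemma integral_sub_rpow_sub_one_le {a c ε : ℝ} (ha : a < 0) (hε : 0 < ε) (hεc : ε ≤ c) :
    ∫ v in (0:ℝ)..(c - ε), (c - v) ^ (a - 1) ≤ ε ^ a / (-a) := by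
  have h0 : (0:ℝ) ∉ uIcc ε c := by
    rw [uIcc_of_le hεc]; exact fun h => h.1.not_gt hε
  rw [integral_comp_sub_left (fun x => x ^ (a - 1)), sub_sub_cancel, sub_zero,
    integral_rpow (Or.inr ⟨by linarith, h0⟩), sub_add_cancel, div_neg, ← neg_div]
  exact div_le_div_of_nonpos_of_le ha.le (by linarith [Real.rpow_nonneg (hε.le.trans hεc) a])

lemma integrableOn_Icc_sub_rpow {a : ℝ} (ha : -1 < a) (b c : ℝ) :
    IntegrableOn (fun v => (c - v) ^ a) (Icc b c) := by
  have h := ((intervalIntegrable_rpow' ha (a := 0) (b := c - b)).comp_sub_left c).symm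
  simp only [sub_zero, sub_sub_cancel] at h
  exact (integrableOn_Icc_iff_integrableOn_Ioc (by simp)).2 h.1

lemma integral_Icc_sub_rpow {a b c : ℝ} (ha : -1 < a) (hbc : b ≤ c) :
    ∫ v in Icc b c, (c - v) ^ a = (c - b) ^ (a + 1) / (a + 1) := by
  rw [integral_Icc_eq_integral_Ioc, ← integral_of_le hbc,
    integral_comp_sub_left (fun x => x ^ a), sub_self, integral_rpow (Or.inl ha),
    Real.zero_rpow (by linarith), sub_zero]

lemma adaptedKernel_of_le {g : ℝ → ℝ → ℝ} {t u : ℝ} (h : u ≤ t) :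
    adaptedKernel g t u = g t u :=
  if_pos h

noncomputable def kernelIncrement (g : ℝ → ℝ → ℝ) (ε t u : ℝ) : ℝ :=
  adaptedKernel g (t + ε) u - adaptedKernel g t u

structure SingularKernelBounds (a K : ℝ) (g : ℝ → ℝ → ℝ) : Prop where
  nonneg : ∀ t u, 0 ≤ u → u ≤ t → 0 ≤ g t u
  le_rpow : ∀ t u, 0 ≤ u → u ≤ t → g t u ≤ K * (t - u) ^ a
  abs_sub_le : ∀ u s t, 0 ≤ u → u < s → s ≤ t →
    |g t u - g s u| ≤ K * (s - u) ^ (a - 1) * (t - s)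

namespace SingularKernelBounds

variable {a K ε t u : ℝ} {g : ℝ → ℝ → ℝ}

theorem of_eq_rpow_mul {F : ℝ → ℝ → ℝ} (ha : a < 0)
    (hform : ∀ t s : ℝ, 0 ≤ s → s ≤ t → g t s = (t - s) ^ a * F t s)
    (hF_nn : ∀ t s : ℝ, 0 ≤ s → s < t → 0 ≤ F t s)
    (hF_bd : ∀ t s : ℝ, 0 ≤ s → s < t → F t s ≤ K)
    (hg_diff : ∀ s t : ℝ, 0 ≤ s → s < t → DifferentiableAt ℝ (fun t' => g t' s) t)
    (hg_deriv : ∀ s t : ℝ, 0 ≤ s → s < t →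
      |deriv (fun t' => g t' s) t| ≤ K * (t - s) ^ (a - 1)) :
    SingularKernelBounds a K g := by
  have hK : 0 ≤ K := (hF_nn 1 0 le_rfl one_pos).trans (hF_bd 1 0 le_rfl one_pos)
  have hdiag : ∀ u, 0 ≤ u → g u u = 0 := fun u hu => by
    rw [hform u u hu le_rfl, sub_self, Real.zero_rpow ha.ne, zero_mul]
  refine ⟨fun t u hu hut => ?_, fun t u hu hut => ?_, fun u s t hu hus hst => ?_⟩
  · rcases hut.eq_or_lt with rfl | hut
    · rw [hdiag u hu]
    · rw [hform t u hu hut.le]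
      exact mul_nonneg (Real.rpow_nonneg (by linarith) a) (hF_nn t u hu hut)
  · rcases hut.eq_or_lt with rfl | hut
    · rw [hdiag u hu, sub_self, Real.zero_rpow ha.ne, mul_zero]
    · rw [hform t u hu hut.le, mul_comm K]
      exact mul_le_mul_of_nonneg_left (hF_bd t u hu hut) (Real.rpow_nonneg (by linarith) a)
  · have hderiv : ∀ x ∈ Icc s t, ‖deriv (fun t' => g t' u) x‖ ≤ K * (s - u) ^ (a - 1) :=
      fun x hx => (hg_deriv u x hu (hus.trans_le hx.1)).trans <| mul_le_mul_of_nonneg_left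
        (Real.rpow_le_rpow_of_nonpos (by linarith) (by linarith [hx.1]) (by linarith)) hK
    have := (convex_Icc s t).norm_image_sub_le_of_norm_deriv_le
      (fun x hx => hg_diff u x hu (hus.trans_le hx.1)) hderiv
      (left_mem_Icc.2 hst) (right_mem_Icc.2 hst)
    rwa [Real.norm_eq_abs, Real.norm_eq_abs, abs_of_nonneg (sub_nonneg.2 hst)] at this

theorem nonneg_const (hg : SingularKernelBounds a K g) : 0 ≤ K := by
  simpa using (hg.nonneg 1 0 le_rfl zero_le_one).trans (hg.le_rpow 1 0 le_rfl zero_le_one)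

theorem adaptedKernel_eq_zero (hg : SingularKernelBounds a K g) (ha : a ≠ 0) (hu : 0 ≤ u)
    (htu : t ≤ u) : adaptedKernel g t u = 0 := by
  unfold adaptedKernel
  split_ifs with hut
  · obtain rfl := le_antisymm hut htu
    refine le_antisymm ?_ (hg.nonneg u u hu le_rfl)
    simpa [Real.zero_rpow ha] using hg.le_rpow u u hu le_rfl
  · rfl

theorem kernelIncrement_eq_zero (hg : SingularKernelBounds a K g) (ha : a ≠ 0) (hε : 0 ≤ ε)
    (hu : 0 ≤ u) (htu : t + ε ≤ u) : kernelIncrement g ε t u = 0 := by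
  rw [kernelIncrement, hg.adaptedKernel_eq_zero ha hu htu,
    hg.adaptedKernel_eq_zero ha hu (by linarith), sub_zero]

theorem abs_kernelIncrement_le (hg : SingularKernelBounds a K g) (hε : 0 ≤ ε) (hu : 0 ≤ u)
    (hut : u < t) : |kernelIncrement g ε t u| ≤ ε * K * (t - u) ^ (a - 1) := by
  rw [kernelIncrement, adaptedKernel_of_le hut.le, adaptedKernel_of_le (by linarith)]
  exact (hg.abs_sub_le u t (t + ε) hu hut (by linarith)).trans_eq (by ring)

end SingularKernelBounds

noncomputable def incrementMajorant (a K ε s u : ℝ) : ℝ :=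
  ε * K * (Ioc 0 (s - ε)).indicator (fun v => (s - v) ^ (a - 1)) u
    + K * (Icc (s - ε) s).indicator (fun v => (s - v) ^ a) u
    + K * (Icc s (s + ε)).indicator (fun v => (s + ε - v) ^ a) u

section Majorant

variable {a K ε s : ℝ}

lemma incrementMajorant_terms_nonneg (hK : 0 ≤ K) (hε : 0 ≤ ε) (u : ℝ) :
    0 ≤ ε * K * (Ioc 0 (s - ε)).indicator (fun v => (s - v) ^ (a - 1)) u ∧
      0 ≤ K * (Icc (s - ε) s).indicator (fun v => (s - v) ^ a) u ∧
      0 ≤ K * (Icc s (s + ε)).indicator (fun v => (s + ε - v) ^ a) u :=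
  ⟨mul_nonneg (mul_nonneg hε hK)
      (indicator_nonneg (fun v hv => Real.rpow_nonneg (by linarith [hv.2]) _) u),
    mul_nonneg hK (indicator_nonneg (fun v hv => Real.rpow_nonneg (by linarith [hv.2]) _) u),
    mul_nonneg hK (indicator_nonneg (fun v hv => Real.rpow_nonneg (by linarith [hv.2]) _) u)⟩

lemma incrementMajorant_nonneg (hK : 0 ≤ K) (hε : 0 ≤ ε) (u : ℝ) :
    0 ≤ incrementMajorant a K ε s u := by
  obtain ⟨h1, h2, h3⟩ := incrementMajorant_terms_nonneg (a := a) (s := s) hK hε u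
  unfold incrementMajorant
  positivity

lemma integrable_incrementMajorant_terms (ha : -1 < a) (hε : 0 < ε) :
    Integrable ((Ioc 0 (s - ε)).indicator fun v => (s - v) ^ (a - 1)) ∧
      Integrable ((Icc (s - ε) s).indicator fun v => (s - v) ^ a) ∧
      Integrable ((Icc s (s + ε)).indicator fun v => (s + ε - v) ^ a) :=
  ⟨((integrableOn_Icc_sub_rpow_of_pos (b := 0) hε).mono_set
      Ioc_subset_Icc_self).integrable_indicator measurableSet_Ioc,
    (integrableOn_Icc_sub_rpow ha (s - ε) s).integrable_indicator measurableSet_Icc,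
    (integrableOn_Icc_sub_rpow ha s (s + ε)).integrable_indicator measurableSet_Icc⟩

lemma integrable_incrementMajorant (ha : -1 < a) (hε : 0 < ε) :
    Integrable (incrementMajorant a K ε s) := by
  obtain ⟨i1, i2, i3⟩ := integrable_incrementMajorant_terms (s := s) ha hε
  exact ((i1.const_mul (ε * K)).add (i2.const_mul K)).add (i3.const_mul K)

lemma integral_incrementMajorant_le (ha : a < 0) (ha' : -1 < a) (hK : 0 ≤ K) (hε : 0 < ε) :
    ∫ u, incrementMajorant a K ε s u ≤ K * (1 / (-a) + 2 / (a + 1)) * ε ^ (a + 1) := by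
  obtain ⟨i1, i2, i3⟩ := integrable_incrementMajorant_terms (s := s) ha' hε
  have tail : ∫ v in Ioc 0 (s - ε), (s - v) ^ (a - 1) ≤ ε ^ a / (-a) := by
    rcases le_or_gt ε s with h | h
    · rw [← integral_of_le (by linarith)]
      exact integral_sub_rpow_sub_one_le ha hε h
    · rw [Ioc_eq_empty (by linarith), Measure.restrict_empty, integral_zero_measure]
      exact div_nonneg (Real.rpow_nonneg hε.le _) (by linarith)
  have left : ∫ v in Icc (s - ε) s, (s - v) ^ a = ε ^ (a + 1) / (a + 1) := by
    rw [integral_Icc_sub_rpow ha' (by linarith), sub_sub_cancel]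
  have right : ∫ v in Icc s (s + ε), (s + ε - v) ^ a = ε ^ (a + 1) / (a + 1) := by
    rw [integral_Icc_sub_rpow ha' (by linarith), add_sub_cancel_left]
  simp only [incrementMajorant]
  rw [integral_add (by exact (i1.const_mul _).add (i2.const_mul _)) (by exact i3.const_mul _),
    integral_add (by exact i1.const_mul _) (by exact i2.const_mul _),
    MeasureTheory.integral_const_mul, MeasureTheory.integral_const_mul,
    MeasureTheory.integral_const_mul, MeasureTheory.integral_indicator measurableSet_Ioc,
    MeasureTheory.integral_indicator measurableSet_Icc,
    MeasureTheory.integral_indicator measurableSet_Icc, left, right]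
  calc ε * K * (∫ v in Ioc 0 (s - ε), (s - v) ^ (a - 1))
        + K * (ε ^ (a + 1) / (a + 1)) + K * (ε ^ (a + 1) / (a + 1))
      ≤ ε * K * (ε ^ a / (-a)) + K * (ε ^ (a + 1) / (a + 1)) + K * (ε ^ (a + 1) / (a + 1)) := by
        gcongr
    _ = K * (1 / (-a) + 2 / (a + 1)) * ε ^ (a + 1) := by
        rw [Real.rpow_add_one hε.ne']
        ring

end Majorant

namespace SingularKernelBounds

variable {a K ε s t T : ℝ} {g : ℝ → ℝ → ℝ}

theorem abs_kernelIncrement_le_incrementMajorant (hg : SingularKernelBounds a K g) (ha : a < 0)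
    (hε : 0 < ε) {u : ℝ} (hu : 0 < u) :
    |kernelIncrement g ε s u| ≤ incrementMajorant a K ε s u := by
  have hK := hg.nonneg_const
  obtain ⟨h1, h2, h3⟩ := incrementMajorant_terms_nonneg (a := a) (s := s) hK hε.le u
  unfold incrementMajorant
  rcases le_or_gt u (s - ε) with hu1 | hu1
  · rw [indicator_of_mem (show u ∈ Ioc 0 (s - ε) from ⟨hu, hu1⟩)]
    linarith [hg.abs_kernelIncrement_le hε.le hu.le (show u < s by linarith)]
  rcases lt_or_ge u s with hu2 | hu2
  · rw [indicator_of_mem (show u ∈ Icc (s - ε) s from ⟨hu1.le, hu2.le⟩)]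
    have hs : |kernelIncrement g ε s u| ≤ K * (s - u) ^ a := by
      rw [kernelIncrement, adaptedKernel_of_le (by linarith), adaptedKernel_of_le hu2.le]
      refine abs_sub_le_of_nonneg_of_le (hg.nonneg _ _ hu.le (by linarith)) ?_
        (hg.nonneg _ _ hu.le hu2.le) (hg.le_rpow _ _ hu.le hu2.le)
      refine (hg.le_rpow _ _ hu.le (by linarith)).trans (mul_le_mul_of_nonneg_left ?_ hK)
      exact Real.rpow_le_rpow_of_nonpos (by linarith) (by linarith) ha.le
    linarith
  rcases le_or_gt u (s + ε) with hu3 | hu3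
  · rw [indicator_of_mem (show u ∈ Icc s (s + ε) from ⟨hu2, hu3⟩)]
    have hs : |kernelIncrement g ε s u| ≤ K * (s + ε - u) ^ a := by
      rw [kernelIncrement, hg.adaptedKernel_eq_zero ha.ne hu.le hu2, sub_zero,
        adaptedKernel_of_le hu3, abs_of_nonneg (hg.nonneg _ _ hu.le hu3)]
      exact hg.le_rpow _ _ hu.le hu3
    linarith
  · rw [hg.kernelIncrement_eq_zero ha.ne hε.le hu.le hu3.le, abs_zero]
    linarith

theorem integral_abs_kernelIncrement_mul_le (hg : SingularKernelBounds a K g) (ha : a < 0)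
    (ha' : -1 < a) (hε : 0 < ε) (hT : 0 ≤ T) (hst : s + 2 * ε ≤ t) :
    ∫ u in (0:ℝ)..T, |kernelIncrement g ε t u| * |kernelIncrement g ε s u|
      ≤ ε * K * (t - ε - s) ^ (a - 1) * (K * (1 / (-a) + 2 / (a + 1)) * ε ^ (a + 1)) := by
  have hK := hg.nonneg_const
  set c := ε * K * (t - ε - s) ^ (a - 1)
  have hc : 0 ≤ c := mul_nonneg (by positivity) (Real.rpow_nonneg (by linarith) _)
  have hΦ := integrable_incrementMajorant (K := K) (s := s) ha' hε
  calc _ ≤ ∫ u in (0:ℝ)..T, c * incrementMajorant a K ε s u := by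
        refine intervalIntegral_le_of_nonneg_of_le hT (fun u _ => by positivity)
          (hΦ.const_mul c).intervalIntegrable fun u hu => ?_
        have hs := hg.abs_kernelIncrement_le_incrementMajorant (s := s) ha hε hu.1
        rcases le_or_gt u (s + ε) with h | h
        · refine mul_le_mul ?_ hs (abs_nonneg _) hc
          refine (hg.abs_kernelIncrement_le hε.le hu.1.le (by linarith)).trans
            (mul_le_mul_of_nonneg_left ?_ (by positivity))
          exact Real.rpow_le_rpow_of_nonpos (by linarith) (by linarith) (by linarith)
        · rw [hg.kernelIncrement_eq_zero ha.ne hε.le hu.1.le h.le, abs_zero, mul_zero]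
          exact mul_nonneg hc ((abs_nonneg _).trans hs)
    _ = c * ∫ u in (0:ℝ)..T, incrementMajorant a K ε s u := intervalIntegral.integral_const_mul _ _
    _ ≤ c * ∫ u, incrementMajorant a K ε s u := by
        gcongr
        rw [integral_of_le hT]
        exact setIntegral_le_integral hΦ (.of_forall (incrementMajorant_nonneg hK hε.le))
    _ ≤ c * (K * (1 / (-a) + 2 / (a + 1)) * ε ^ (a + 1)) := by
        gcongr
        exact integral_incrementMajorant_le ha ha' hK hε

theorem integral_integral_abs_kernelIncrement_mul_le (hg : SingularKernelBounds a K g)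
    (ha : a < 0) (ha' : -1 < a) (hε : 0 < ε) (hT : 0 ≤ T) (ht : 2 * ε ≤ t) :
    ∫ s in (0:ℝ)..(t - 2 * ε), ∫ u in (0:ℝ)..T,
        |kernelIncrement g ε t u| * |kernelIncrement g ε s u|
      ≤ K ^ 2 * (1 / (-a) + 2 / (a + 1)) / (-a) * ε ^ (2 * a + 2) := by
  have hK := hg.nonneg_const
  have hκ : 0 < 1 / (-a) + 2 / (a + 1) := add_pos (one_div_pos.2 (neg_pos.2 ha)) (by bound)
  set M := ε * K * (K * (1 / (-a) + 2 / (a + 1)) * ε ^ (a + 1)) with hM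
  have hM0 : 0 ≤ M := by positivity
  have hlim : t - 2 * ε = t - ε - ε := by ring
  calc _ ≤ ∫ s in (0:ℝ)..(t - 2 * ε), M * (t - ε - s) ^ (a - 1) := by
        refine intervalIntegral_le_of_nonneg_of_le (by linarith)
          (fun s _ => intervalIntegral.integral_nonneg hT fun u _ => by positivity) ?_
          fun s hs => ?_
        · rw [hlim, intervalIntegrable_iff_integrableOn_Icc_of_le (by linarith)]
          exact (integrableOn_Icc_sub_rpow_of_pos hε).const_mul M
        · exact (hg.integral_abs_kernelIncrement_mul_le ha ha' hε hT (by linarith [hs.2])).trans_eq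
            (by ring)
    _ = M * ∫ s in (0:ℝ)..(t - ε - ε), (t - ε - s) ^ (a - 1) := by
        rw [intervalIntegral.integral_const_mul, hlim]
    _ ≤ M * (ε ^ a / (-a)) := by
        gcongr
        exact integral_sub_rpow_sub_one_le (c := t - ε) ha hε (by linarith)
    _ = K ^ 2 * (1 / (-a) + 2 / (a + 1)) / (-a) * ε ^ (2 * a + 2) := by
        rw [hM, show 2 * a + 2 = a + 1 + a + 1 by ring, Real.rpow_add_one hε.ne' (a + 1 + a),
          Real.rpow_add hε (a + 1) a]
        ring

end SingularKernelBounds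

theorem stmt15_general (m : ℕ) (hm3 : 3 ≤ m) (T : ℝ) (hT : 0 < T)
    (K : ℝ) (g F : ℝ → ℝ → ℝ)
    (hform : ∀ t s : ℝ, 0 ≤ s → s ≤ t →
      g t s = (t - s) ^ (1 / (2 * (m:ℝ)) - 1/2) * F t s)
    (hF_nn : ∀ t s : ℝ, 0 ≤ s → s < t → 0 ≤ F t s)
    (hF_bd : ∀ t s : ℝ, 0 ≤ s → s < t → F t s ≤ K)
    (hg_diff : ∀ s t : ℝ, 0 ≤ s → s < t →
      DifferentiableAt ℝ (fun t' => g t' s) t)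
    (hg_deriv : ∀ s t : ℝ, 0 ≤ s → s < t →
      |deriv (fun t' => g t' s) t| ≤ K * (t - s) ^ (1 / (2 * (m:ℝ)) - 1/2 - 1)) :
    ∃ C : ℝ, ∃ ε₀ > (0:ℝ), ∀ ε ∈ Ioo (0:ℝ) ε₀,
      (∫ t in (2 * ε)..T, ∫ s in (0:ℝ)..(t - 2 * ε), ∫ u in (0:ℝ)..T,
          |adaptedKernel g (t + ε) u - adaptedKernel g t u|
            * |adaptedKernel g (s + ε) u - adaptedKernel g s u|)
        ≤ C * ε ^ (1 + 1 / (m:ℝ)) := by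
  set a : ℝ := 1 / (2 * (m:ℝ)) - 1/2 with ha_def
  have hm : (3:ℝ) ≤ m := by exact_mod_cast hm3
  have ha : a < 0 := by
    have : 1 / (2 * (m:ℝ)) ≤ 1 / 6 := by gcongr; linarith
    linarith
  have ha' : -1 < a := by
    have : 0 < 1 / (2 * (m:ℝ)) := by positivity
    linarith
  have hexp : 2 * a + 2 = 1 + 1 / (m:ℝ) := by
    rw [ha_def]; field_simp; ring
  have hg : SingularKernelBounds a K g := .of_eq_rpow_mul ha hform hF_nn hF_bd hg_diff hg_deriv
  have hκ : 0 < 1 / (-a) + 2 / (a + 1) := add_pos (one_div_pos.2 (neg_pos.2 ha)) (by bound)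
  set C := K ^ 2 * (1 / (-a) + 2 / (a + 1)) / (-a)
  have hC : 0 ≤ C := div_nonneg (by positivity) (neg_nonneg.2 ha.le)
  refine ⟨T * C, T / 2, by positivity, fun ε hε => ?_⟩
  calc _ ≤ ∫ t in (2 * ε)..T, C * ε ^ (2 * a + 2) :=
        intervalIntegral_le_of_nonneg_of_le (by linarith [hε.2])
          (fun t ht => intervalIntegral.integral_nonneg (by linarith [ht.1])
            fun s _ => intervalIntegral.integral_nonneg hT.le fun u _ => by positivity)
          intervalIntegrable_const
          fun t ht => hg.integral_integral_abs_kernelIncrement_mul_le ha ha' hε.1 hT.le ht.1.le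
    _ = (T - 2 * ε) * (C * ε ^ (2 * a + 2)) := by rw [intervalIntegral.integral_const, smul_eq_mul]
    _ ≤ T * C * ε ^ (1 + 1 / (m:ℝ)) := by
        rw [← hexp, mul_assoc]
        exact mul_le_mul_of_nonneg_right (by linarith [hε.1])
          (mul_nonneg hC (Real.rpow_nonneg hε.1.le _))

theorem stmt15 (m : ℕ) (hm3 : 3 ≤ m) (hmodd : Odd m) (T : ℝ) (hT : 0 < T)
    (K : ℝ) (g F : ℝ → ℝ → ℝ)
    (hform : ∀ t s : ℝ, 0 ≤ s → s ≤ t →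
      g t s = (t - s) ^ (1 / (2 * (m:ℝ)) - 1/2) * F t s)
    (hF_nn : ∀ t s : ℝ, 0 ≤ s → s < t → 0 ≤ F t s)
    (hF_bd : ∀ t s : ℝ, 0 ≤ s → s < t → F t s ≤ K)
    (hF_mono : ∀ s : ℝ, 0 ≤ s → MonotoneOn (fun t => F t s) (Ioi s))
    (hg_anti : ∀ s : ℝ, 0 ≤ s → AntitoneOn (fun t => g t s) (Ioi s))
    (hg_diff : ∀ s t : ℝ, 0 ≤ s → s < t →
      DifferentiableAt ℝ (fun t' => g t' s) t)
    (hg_deriv : ∀ s t : ℝ, 0 ≤ s → s < t →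
      |deriv (fun t' => g t' s) t| ≤ K * (t - s) ^ (1 / (2 * (m:ℝ)) - 1/2 - 1)) :
    ∃ C : ℝ, ∃ ε₀ > (0:ℝ), ∀ ε ∈ Ioo (0:ℝ) ε₀,
      (∫ t in (2 * ε)..T, ∫ s in (0:ℝ)..(t - 2 * ε), ∫ u in (0:ℝ)..T,
          |adaptedKernel g (t + ε) u - adaptedKernel g t u|
            * |adaptedKernel g (s + ε) u - adaptedKernel g s u|)
        ≤ C * ε ^ (1 + 1 / (m:ℝ)) :=
  stmt15_general m hm3 T hT K g F hform hF_nn hF_bd hg_diff hg_deriv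
end

section
/- Let T > 0. Then sup_{ε∈(0,1]} ε⁻² ∫_0^T ∫_0^t |(t−s+ε)^{1/3} + |t−s−ε|^{1/3} − 2(t−s)^{1/3}|³ ds dt < ∞. -/
/-!
Tangent-line bounds for the concave map `x ↦ x ^ (1/3)` show that the second difference
`(u + ε)^(1/3) + (u - ε)^(1/3) - 2 u^(1/3)` has absolute value at most `ε (u - ε)^(-2/3) / 3`
for `u > ε`, while for `u ≤ 2ε` it is `O(ε^(1/3))`. Hence its cube is `O(ε³ / (u + 2ε)²)`,
whose integral over `s ∈ [0, t]` (with `u = t - s`) is `O(ε²)` uniformly in `t`.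
-/

open Set MeasureTheory intervalIntegral

theorem rpow_sub_rpow_le_mul_sub {p a b : ℝ} (hp0 : 0 ≤ p) (hp1 : p ≤ 1) (ha : 0 ≤ a)
    (hb : 0 < b) : a ^ p - b ^ p ≤ p * b ^ (p - 1) * (a - b) := by
  have hbern := rpow_one_add_le_one_add_mul_self (s := a / b - 1) (by
    have := div_nonneg ha hb.le; linarith) hp0 hp1
  rw [add_sub_cancel, Real.div_rpow ha hb.le, div_le_iff₀ (by positivity)] at hbern
  have : (1 + p * (a / b - 1)) * b ^ p = b ^ p + p * (b ^ p / b) * (a - b) := by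
    field_simp
  rw [Real.rpow_sub_one hb.ne']
  linarith

/-- With `p = 2H` and `u = t - s`, twice the covariance of the fractional Brownian increments
`X_{t+ε} - X_t` and `X_{s+ε} - X_s`. -/
noncomputable def rpowSecondDiff (p ε u : ℝ) : ℝ := (u + ε) ^ p + |u - ε| ^ p - 2 * u ^ p

theorem continuous_rpowSecondDiff {p : ℝ} (hp : 0 ≤ p) (ε : ℝ) :
    Continuous (rpowSecondDiff p ε) := by
  have := Real.continuous_rpow_const hp
  unfold rpowSecondDiff
  fun_prop

theorem abs_rpowSecondDiff_le_of_le {p ε u : ℝ} (hp : 0 ≤ p) (hu : 0 ≤ u) (huε : u ≤ 2 * ε) :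
    |rpowSecondDiff p ε u| ≤ 2 * (3 * ε) ^ p := by
  have hle : ∀ x, 0 ≤ x → x ≤ 3 * ε → 0 ≤ x ^ p ∧ x ^ p ≤ (3 * ε) ^ p := fun x hx0 hx =>
    ⟨Real.rpow_nonneg hx0 p, Real.rpow_le_rpow hx0 hx hp⟩
  obtain ⟨h1, h1'⟩ := hle (u + ε) (by linarith) (by linarith)
  obtain ⟨h2, h2'⟩ := hle |u - ε| (abs_nonneg _) (abs_le.2 ⟨by linarith, by linarith⟩)
  obtain ⟨h3, h3'⟩ := hle u hu (by linarith)
  rw [rpowSecondDiff, abs_le]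
  constructor <;> linarith

theorem abs_rpowSecondDiff_le_of_lt {p ε u : ℝ} (hp0 : 0 ≤ p) (hp1 : p ≤ 1) (hε : 0 ≤ ε)
    (hεu : ε < u) : |rpowSecondDiff p ε u| ≤ p * ε * (u - ε) ^ (p - 1) := by
  have hu : 0 < u := hε.trans_lt hεu
  have hv : 0 < u - ε := sub_pos.2 hεu
  have hmono := Real.rpow_le_rpow hu.le (le_add_of_nonneg_right hε) hp0
  have htan_u := rpow_sub_rpow_le_mul_sub hp0 hp1 (by linarith : 0 ≤ u + ε) hu
  have htan_u' := rpow_sub_rpow_le_mul_sub hp0 hp1 hv.le hu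
  have htan_v := rpow_sub_rpow_le_mul_sub hp0 hp1 hu.le hv
  rw [rpowSecondDiff, abs_of_pos hv, abs_le]
  constructor <;> linarith

theorem rpow_one_third_pow_three {x : ℝ} (hx : 0 ≤ x) : (x ^ ((1:ℝ)/3)) ^ 3 = x := by
  rw [← Real.rpow_natCast, ← Real.rpow_mul hx]; norm_num

theorem abs_rpowSecondDiff_one_third_pow_three_le {ε u : ℝ} (hε : 0 < ε) (hu : 0 ≤ u) :
    |rpowSecondDiff (1/3) ε u| ^ 3 ≤ 384 * ε ^ 3 * ((u + 2 * ε) ^ 2)⁻¹ := by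
  rw [← div_eq_mul_inv, le_div_iff₀ (by positivity)]
  rcases le_or_gt u (2 * ε) with hsmall | hlarge
  · have hD := pow_le_pow_left₀ (abs_nonneg _)
      (abs_rpowSecondDiff_le_of_le (p := 1/3) (by norm_num) hu hsmall) 3
    rw [mul_pow, rpow_one_third_pow_three (by positivity)] at hD
    have hnear : (u + 2 * ε) ^ 2 ≤ 16 * ε ^ 2 := by nlinarith
    nlinarith [pow_pos hε 3]
  · have hv : 0 < u - ε := by linarith
    have hD := pow_le_pow_left₀ (abs_nonneg _)
      (abs_rpowSecondDiff_le_of_lt (p := 1/3) (by norm_num) (by norm_num) hε.le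
        (by linarith : ε < u)) 3
    have hcube : ((u - ε) ^ ((1:ℝ)/3 - 1)) ^ 3 * (u - ε) ^ 2 = 1 := by
      rw [← Real.rpow_natCast, ← Real.rpow_mul hv.le, ← Real.rpow_natCast, ← Real.rpow_add hv]
      norm_num
    rw [mul_pow, mul_pow] at hD
    have hfar : (u + 2 * ε) ^ 2 ≤ 16 * (u - ε) ^ 2 := by nlinarith
    calc |rpowSecondDiff (1/3) ε u| ^ 3 * (u + 2 * ε) ^ 2
        ≤ (1/3) ^ 3 * ε ^ 3 * ((u - ε) ^ ((1:ℝ)/3 - 1)) ^ 3 * (16 * (u - ε) ^ 2) := by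
          gcongr
      _ = 16 / 27 * ε ^ 3 := by linear_combination 16 / 27 * ε ^ 3 * hcube
      _ ≤ 384 * ε ^ 3 := by nlinarith [pow_pos hε 3]

theorem integral_inv_sq_sub_add {t c : ℝ} (hc : 0 < c) (ht : 0 ≤ t) :
    ∫ s in (0:ℝ)..t, ((t - s + c) ^ 2)⁻¹ = c⁻¹ - (t + c)⁻¹ := by
  have hsub := integral_comp_sub_left (fun x : ℝ => (x ^ (-2 : ℤ))) (t + c) (a := 0) (b := t)
  have hzero : (0:ℝ) ∉ uIcc c (t + c) := by
    rw [uIcc_of_le (by linarith)]; exact fun h => hc.not_ge h.1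
  rw [sub_zero, add_sub_cancel_left, integral_zpow (Or.inr ⟨by decide, hzero⟩)] at hsub
  simp only [sub_add_eq_add_sub, zpow_neg, zpow_ofNat] at hsub ⊢
  rw [hsub]
  norm_num
  ring

theorem integral_abs_rpowSecondDiff_one_third_pow_three_le {ε t : ℝ} (hε : 0 < ε) (ht : 0 ≤ t) :
    ∫ s in (0:ℝ)..t, |rpowSecondDiff (1/3) ε (t - s)| ^ 3 ≤ 192 * ε ^ 2 := by
  have hmajorant : ∀ s ∈ Icc 0 t, |rpowSecondDiff (1/3) ε (t - s)| ^ 3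
      ≤ 384 * ε ^ 3 * ((t - s + 2 * ε) ^ 2)⁻¹ := fun s hs =>
    abs_rpowSecondDiff_one_third_pow_three_le hε (sub_nonneg.2 hs.2)
  have hint : IntervalIntegrable (fun s => 384 * ε ^ 3 * ((t - s + 2 * ε) ^ 2)⁻¹) volume 0 t := by
    refine ContinuousOn.intervalIntegrable fun s hs => ?_
    rw [uIcc_of_le ht] at hs
    have : t - s + 2 * ε ≠ 0 := by linarith [hs.2]
    fun_prop (disch := positivity)
  have hcont := continuous_rpowSecondDiff (p := 1/3) (by norm_num) ε
  calc ∫ s in (0:ℝ)..t, |rpowSecondDiff (1/3) ε (t - s)| ^ 3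
      ≤ ∫ s in (0:ℝ)..t, 384 * ε ^ 3 * ((t - s + 2 * ε) ^ 2)⁻¹ :=
        integral_mono_on ht ((by fun_prop : Continuous fun s =>
          |rpowSecondDiff (1/3) ε (t - s)| ^ 3).intervalIntegrable _ _) hint hmajorant
    _ = 384 * ε ^ 3 * ((2 * ε)⁻¹ - (t + 2 * ε)⁻¹) := by
        rw [intervalIntegral.integral_const_mul, integral_inv_sq_sub_add (by positivity) ht]
    _ ≤ 384 * ε ^ 3 * (2 * ε)⁻¹ := by gcongr; linarith [inv_pos.2 (by linarith : 0 < t + 2 * ε)]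
    _ = 192 * ε ^ 2 := by field_simp; ring

theorem integral_integral_abs_rpowSecondDiff_one_third_pow_three_le {ε T : ℝ} (hε : 0 < ε)
    (hT : 0 ≤ T) :
    ∫ t in (0:ℝ)..T, ∫ s in (0:ℝ)..t, |rpowSecondDiff (1/3) ε (t - s)| ^ 3
      ≤ 192 * ε ^ 2 * T := by
  have hinner : ∀ t ∈ uIoc 0 T, ‖∫ s in (0:ℝ)..t, |rpowSecondDiff (1/3) ε (t - s)| ^ 3‖
      ≤ 192 * ε ^ 2 := by
    intro t ht
    rw [uIoc_of_le hT] at ht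
    rw [Real.norm_of_nonneg (integral_nonneg ht.1.le fun s _ => by positivity)]
    exact integral_abs_rpowSecondDiff_one_third_pow_three_le hε ht.1.le
  have hbound := norm_integral_le_of_norm_le_const hinner
  rw [sub_zero, abs_of_nonneg hT] at hbound
  exact (le_abs_self _).trans hbound

theorem stmt18 (T : ℝ) (hT : 0 < T) :
    ∃ C : ℝ, ∀ ε ∈ Ioc (0:ℝ) 1,
      (ε ^ 2)⁻¹ * (∫ t in (0:ℝ)..T, ∫ s in (0:ℝ)..t,
          |(t - s + ε) ^ ((1:ℝ)/3) + |t - s - ε| ^ ((1:ℝ)/3)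
              - 2 * (t - s) ^ ((1:ℝ)/3)| ^ 3)
        ≤ C := by
  refine ⟨192 * T, fun ε hε => ?_⟩
  rw [inv_mul_le_iff₀ (pow_pos hε.1 2)]
  exact (integral_integral_abs_rpowSecondDiff_one_third_pow_three_le hε.1 hT.le).trans_eq
    (by ring)
end
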